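/- arXiv:1403.5079 — 2 statements merged into one kernel-verified Lean document; each statement's English description precedes it below -/
import Mathlib

section
/- If {g_1,...,g_n} is a system of free generators of the free metabelian Lie ring M, then the determinant of the Jacobi matrix J(g_1,...,g_n) equals ±1 in Z[x_1,...,x_n]. -/
/-!
Free generators `g` of `M` give a Lie endomorphism `ψ : xⱼ ↦ gⱼ` of `M` with a left inverse,
so `ψ` is surjective. Lift `ψ` to the substitution `xⱼ ↦ Gⱼ` of the free Lie ring and apply
the chain rule for the derivatives `∂ᵢ` to preimages of the generators `xₖ`: this exhibits a
right inverse of `J(g)` over `ℤ[x₁,…,xₙ]`. Hence `det J(g)` is a unit, and the units of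
`ℤ[x₁,…,xₙ]` are `±1`.
-/

attribute [local instance] LieRing.ofAssociativeRing

/-- The natural embedding `ω : L → U(L)` of the free Lie ring on `x₁,…,xₙ` into its
universal enveloping algebra, identified with the free associative algebra. -/
noncomputable def ω (n : ℕ) : FreeLieAlgebra ℤ (Fin n) →ₗ⁅ℤ⁆ FreeAlgebra ℤ (Fin n) :=
  FreeLieAlgebra.lift ℤ (FreeAlgebra.ι ℤ)

/-- The natural homomorphism `φ' : U(L) → ℤ[x₁,…,xₙ]`. -/
noncomputable def φ' (n : ℕ) : FreeAlgebra ℤ (Fin n) →ₐ[ℤ] MvPolynomial (Fin n) ℤ :=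
  FreeAlgebra.lift ℤ (fun i => MvPolynomial.X i)

/-- The free metabelian Lie ring `M` on `x₁,…,xₙ`: the quotient of the free Lie ring by
the second derived ideal `[L',L']`. -/
abbrev M (n : ℕ) :=
  FreeLieAlgebra ℤ (Fin n) ⧸ LieAlgebra.derivedSeries ℤ (FreeLieAlgebra ℤ (Fin n)) 2

/-- The natural projection `L → M`. -/
noncomputable def mkM (n : ℕ) : FreeLieAlgebra ℤ (Fin n) → M n := LieSubmodule.Quotient.mk

/-- `D` is the system of partial derivatives `∂ᵢ : M → ℤ[x₁,…,xₙ]` of the free metabelian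
Lie ring: for any lift `w ∈ L` of an element of `M` with right derivatives `d`
(i.e. `ω w = ∑ᵢ xᵢ·dᵢ` in `U(L)`), `D` is given by abelianizing the `dᵢ`. -/
def IsDeriv (n : ℕ) (D : M n → Fin n → MvPolynomial (Fin n) ℤ) : Prop :=
  ∀ (w : FreeLieAlgebra ℤ (Fin n)) (d : Fin n → FreeAlgebra ℤ (Fin n)),
    ω n w = ∑ i, FreeAlgebra.ι ℤ i * d i → D (mkM n w) = fun i => φ' n (d i)

/-- `h` is a system of free generators of the free metabelian Lie ring `M`: every map
from `h` to a metabelian Lie ring extends uniquely to a Lie ring homomorphism. -/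
def IsFreeGenSet (n : ℕ) (h : Fin n → M n) : Prop :=
  ∀ (A : Type) [LieRing A] [LieAlgebra ℤ A],
    (∀ a b c d : A, ⁅⁅a,b⁆,⁅c,d⁆⁆ = 0) →
      ∀ f : Fin n → A, ∃! φ : M n →ₗ⁅ℤ⁆ A, ∀ i, φ (h i) = f i

open FreeLieAlgebra (of)

theorem MvPolynomial.eq_one_or_eq_neg_one_of_isUnit {σ : Type*} {p : MvPolynomial σ ℤ}
    (hp : IsUnit p) : p = 1 ∨ p = -1 := by
  obtain ⟨r, hr, rfl⟩ := MvPolynomial.isUnit_iff_eq_C_of_isReduced.mp hp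
  rcases Int.isUnit_iff.mp hr with rfl | rfl <;> simp

theorem FreeLieAlgebra.lift_mem_of_forall_mem {R X L : Type*} [CommRing R] [LieRing L]
    [LieAlgebra R L] (K : LieSubalgebra R L) {f : X → L} (hf : ∀ x, f x ∈ K)
    (w : FreeLieAlgebra R X) : lift R f w ∈ K := by
  have : lift R f = K.incl.comp (lift R fun x => ⟨f x, hf x⟩) :=
    hom_ext fun x => by simp
  rw [this]
  exact SetLike.coe_mem _

namespace FreeAlgebra

variable (R X : Type*) [CommRing R] [Fintype X]

def sumιMul : (X → FreeAlgebra R X) →ₗ[R] FreeAlgebra R X :=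
  ∑ i, (LinearMap.mulLeft R (ι R i)).comp (LinearMap.proj i)

variable {R X}

theorem sumιMul_apply (d : X → FreeAlgebra R X) : sumιMul R X d = ∑ i, ι R i * d i := by
  simp [sumιMul]

theorem sumιMul_mul (d : X → FreeAlgebra R X) (a : FreeAlgebra R X) :
    sumιMul R X d * a = sumιMul R X (d · * a) := by
  simp [sumιMul_apply, Finset.sum_mul, mul_assoc]

variable (R X)

def sumιMulLieSubalgebra : LieSubalgebra R (FreeAlgebra R X) :=
  { LinearMap.range (sumιMul R X) with
    lie_mem' := by
      rintro _ _ ⟨d, rfl⟩ ⟨e, rfl⟩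
      rw [Ring.lie_def, sumιMul_mul, sumιMul_mul]
      exact ⟨_, map_sub _ _ _⟩ }

end FreeAlgebra

theorem exists_ω_eq_sum_ι_mul {n : ℕ} (w : FreeLieAlgebra ℤ (Fin n)) :
    ∃ d : Fin n → FreeAlgebra ℤ (Fin n), ω n w = ∑ i, FreeAlgebra.ι ℤ i * d i := by
  obtain ⟨d, hd⟩ := FreeLieAlgebra.lift_mem_of_forall_mem
    (FreeAlgebra.sumιMulLieSubalgebra ℤ (Fin n)) (f := FreeAlgebra.ι ℤ)
    (fun k => ⟨Pi.single k 1, by simp [FreeAlgebra.sumιMul_apply, Pi.single_apply]⟩) w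
  exact ⟨d, by rw [← FreeAlgebra.sumιMul_apply, hd]; rfl⟩

section Quotient

variable {R L L' : Type*} [CommRing R] [LieRing L] [LieAlgebra R L] [LieRing L']
  [LieAlgebra R L'] (I : LieIdeal R L)

def LieIdeal.quotientMk : L →ₗ⁅R⁆ L ⧸ I where
  toLinearMap := I.toSubmodule.mkQ
  map_lie' := rfl

theorem LieIdeal.ker_quotientMk : I.quotientMk.ker = I := by
  ext x
  exact LieSubmodule.Quotient.mk_eq_zero'

theorem LieIdeal.quotientMk_surjective : Function.Surjective I.quotientMk :=
  Submodule.Quotient.mk_surjective _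

def LieIdeal.quotientLift (f : L →ₗ⁅R⁆ L') (hf : I ≤ f.ker) : L ⧸ I →ₗ⁅R⁆ L' where
  toLinearMap := I.toSubmodule.liftQ f.toLinearMap fun x hx => hf hx
  map_lie' := by
    rintro ⟨x⟩ ⟨y⟩
    exact f.map_lie x y

end Quotient

namespace LieAlgebra

variable {R L L' : Type*} [CommRing R] [LieRing L] [LieAlgebra R L] [LieRing L']
  [LieAlgebra R L']

theorem derivedSeries_succ (k : ℕ) :
    derivedSeries R L (k + 1) = ⁅derivedSeries R L k, derivedSeries R L k⁆ :=
  derivedSeriesOfIdeal_succ R L ⊤ k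

theorem lie_lie_mem_derivedSeries_two (a b c d : L) :
    ⁅⁅a, b⁆, ⁅c, d⁆⁆ ∈ derivedSeries R L 2 := by
  have h : ∀ x y : L, ⁅x, y⁆ ∈ derivedSeries R L 1 := fun x y => by
    rw [derivedSeries_succ]
    exact LieSubmodule.lie_mem_lie (LieSubmodule.mem_top x) (LieSubmodule.mem_top y)
  rw [derivedSeries_succ]
  exact LieSubmodule.lie_mem_lie (h a b) (h c d)

theorem derivedSeries_le_ker {k : ℕ} (hL' : derivedSeries R L' k = ⊥) (f : L →ₗ⁅R⁆ L') :
    derivedSeries R L k ≤ f.ker := by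
  rw [← LieIdeal.map_eq_bot_iff, eq_bot_iff, ← hL']
  exact LieIdeal.derivedSeries_map_le k

theorem derivedSeries_quotient_derivedSeries (k : ℕ) :
    derivedSeries R (L ⧸ derivedSeries R L k) k = ⊥ := by
  rw [← LieIdeal.derivedSeries_map_eq k (LieIdeal.quotientMk_surjective _),
    LieIdeal.map_eq_bot_iff, LieIdeal.ker_quotientMk]

end LieAlgebra

section FreeMetabelian

variable {n : ℕ}

theorem mkM_surjective : Function.Surjective (mkM n) :=
  Submodule.Quotient.mk_surjective _

theorem M_metabelian (a b c d : M n) : ⁅⁅a, b⁆, ⁅c, d⁆⁆ = 0 := by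
  have h := LieAlgebra.lie_lie_mem_derivedSeries_two (R := ℤ) a b c d
  rwa [LieAlgebra.derivedSeries_quotient_derivedSeries, LieSubmodule.mem_bot] at h

theorem exists_lieHom_mkM_lift (G : Fin n → FreeLieAlgebra ℤ (Fin n)) :
    ∃ ψ : M n →ₗ⁅ℤ⁆ M n, ∀ w, ψ (mkM n w) = mkM n (FreeLieAlgebra.lift ℤ G w) :=
  ⟨LieIdeal.quotientLift _ ((LieIdeal.quotientMk _).comp (FreeLieAlgebra.lift ℤ G))
    (LieAlgebra.derivedSeries_le_ker (LieAlgebra.derivedSeries_quotient_derivedSeries 2) _),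
    fun _ => rfl⟩

theorem IsFreeGenSet.hom_ext {g : Fin n → M n} (hg : IsFreeGenSet n g) {A : Type} [LieRing A]
    [LieAlgebra ℤ A] (hA : ∀ a b c d : A, ⁅⁅a, b⁆, ⁅c, d⁆⁆ = 0) {f₁ f₂ : M n →ₗ⁅ℤ⁆ A}
    (h : ∀ i, f₁ (g i) = f₂ (g i)) : f₁ = f₂ :=
  (hg A hA (f₂ ∘ g)).unique h fun _ => rfl

end FreeMetabelian

section Jacobian

variable {n : ℕ}

@[simp]
theorem ω_of (k : Fin n) : ω n (of ℤ k) = FreeAlgebra.ι ℤ k :=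
  FreeLieAlgebra.lift_of_apply _ _

theorem ω_lift (G : Fin n → FreeLieAlgebra ℤ (Fin n)) (w : FreeLieAlgebra ℤ (Fin n)) :
    ω n (FreeLieAlgebra.lift ℤ G w) = FreeAlgebra.lift ℤ (fun j => ω n (G j)) (ω n w) := by
  have : (ω n).comp (FreeLieAlgebra.lift ℤ G) =
      (FreeAlgebra.lift ℤ fun j => ω n (G j)).toLieHom.comp (ω n) :=
    FreeLieAlgebra.hom_ext fun x => by
      change _ = FreeAlgebra.lift ℤ _ (ω n (of ℤ x))
      simp
  exact LieHom.congr_fun this w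

theorem φ'_lift (f : Fin n → FreeAlgebra ℤ (Fin n)) (a : FreeAlgebra ℤ (Fin n)) :
    φ' n (FreeAlgebra.lift ℤ f a) = MvPolynomial.aeval (fun j => φ' n (f j)) (φ' n a) := by
  have : (φ' n).comp (FreeAlgebra.lift ℤ f) =
      (MvPolynomial.aeval fun j => φ' n (f j)).comp (φ' n) :=
    FreeAlgebra.hom_ext <| funext fun x => by simp [φ']
  exact AlgHom.congr_fun this a

theorem IsDeriv.apply_mk_of {D : M n → Fin n → MvPolynomial (Fin n) ℤ} (hD : IsDeriv n D)
    (k : Fin n) : D (mkM n (of ℤ k)) = Pi.single k 1 := by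
  rw [hD _ (Pi.single k 1) (by simp [Pi.single_apply])]
  ext i : 1
  rcases eq_or_ne i k with rfl | h <;> simp [*]

/-- The chain rule for the substitution `xⱼ ↦ Gⱼ`. -/
theorem IsDeriv.apply_mk_lift {D : M n → Fin n → MvPolynomial (Fin n) ℤ} (hD : IsDeriv n D)
    (G : Fin n → FreeLieAlgebra ℤ (Fin n)) (w : FreeLieAlgebra ℤ (Fin n)) (i : Fin n) :
    D (mkM n (FreeLieAlgebra.lift ℤ G w)) i =
      ∑ j, D (mkM n (G j)) i * MvPolynomial.aeval (fun j => φ' n (ω n (G j))) (D (mkM n w) j) := by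
  obtain ⟨e, he⟩ := exists_ω_eq_sum_ι_mul w
  choose t ht using fun j => exists_ω_eq_sum_ι_mul (G j)
  have hGw : ω n (FreeLieAlgebra.lift ℤ G w) =
      ∑ i, FreeAlgebra.ι ℤ i * ∑ j, t j i * FreeAlgebra.lift ℤ (fun j => ω n (G j)) (e j) := by
    rw [ω_lift, he, map_sum]
    simp only [map_mul, FreeAlgebra.lift_ι_apply, ht, Finset.sum_mul, Finset.mul_sum, mul_assoc]
    exact Finset.sum_comm
  simp only [hD _ _ hGw, hD _ _ he, hD _ _ (ht _), map_sum, map_mul, φ'_lift]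

theorem IsDeriv.exists_jacobian_mul_eq_one {D : M n → Fin n → MvPolynomial (Fin n) ℤ}
    (hD : IsDeriv n D) (G : Fin n → FreeLieAlgebra ℤ (Fin n))
    (hG : Function.Surjective (mkM n ∘ FreeLieAlgebra.lift ℤ G)) :
    ∃ K, (Matrix.of fun i j => D (mkM n (G j)) i) * K = 1 := by
  choose H hH using fun k => hG (mkM n (of ℤ k))
  refine ⟨Matrix.of fun j k =>
    MvPolynomial.aeval (fun j => φ' n (ω n (G j))) (D (mkM n (H k)) j), Matrix.ext fun i k => ?_⟩
  rw [Matrix.mul_apply, Matrix.one_apply, ← Pi.single_apply, ← hD.apply_mk_of, ← hH k]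
  exact (hD.apply_mk_lift G (H k) i).symm

end Jacobian

/-- If `g₁,…,gₙ` is a system of free generators of the free metabelian
Lie ring `M`, then `det J(g₁,…,gₙ) = ±1` in `ℤ[x₁,…,xₙ]`. -/
theorem det_jacobi_of_free_generators (n : ℕ) (g : Fin n → M n)
    (hg : IsFreeGenSet n g)
    (D : M n → Fin n → MvPolynomial (Fin n) ℤ) (hD : IsDeriv n D) :
    (Matrix.of fun i j => D (g j) i).det = 1 ∨
      (Matrix.of fun i j => D (g j) i).det = -1 := by
  obtain ⟨φ, hφ, -⟩ := hg (M n) M_metabelian fun i => mkM n (of ℤ i)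
  choose G hG using fun i => mkM_surjective (g i)
  obtain ⟨ψ, hψ⟩ := exists_lieHom_mkM_lift G
  have hψφ : ψ.comp φ = LieHom.id :=
    hg.hom_ext M_metabelian fun i => by simp [hφ, hψ, hG]
  have hG_surj : Function.Surjective (mkM n ∘ FreeLieAlgebra.lift ℤ G) := fun m => by
    obtain ⟨w, hw⟩ := mkM_surjective (φ m)
    exact ⟨w, by rw [Function.comp_apply, ← hψ, hw, ← LieHom.comp_apply, hψφ, LieHom.id_apply]⟩
  obtain ⟨K, hK⟩ := hD.exists_jacobian_mul_eq_one G hG_surj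
  simp only [hG] at hK
  exact MvPolynomial.eq_one_or_eq_neg_one_of_isUnit (Matrix.isUnit_det_of_right_inverse hK)
end

section
/- If a system {g_1,...,g_k} of elements of the free metabelian Lie ring M is uniformly distributed on the variety of metabelian Lie rings, then no g_i lies in the derived subalgebra M', and the images ḡ_1,...,ḡ_k of g_1,...,g_k under the natural map M → M/M' form a primitive system in the free abelian Lie ring M/M' (i.e. extend to a basis of the free abelian group of rank n). -/
attribute [local instance 100] LieRing.ofAssociativeRing

/-- A system of Lie polynomials `g₁,…,g_k` is uniformly distributed on the variety of
metabelian Lie rings: for every finite metabelian Lie ring `R` and every `p ∈ R^k`, the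
number of `r ∈ R^n` with `(g₁(r),…,g_k(r)) = p` equals `|R|^{n−k}`. -/
def IsUniformlyDistributed (n k : ℕ) (g : Fin k → FreeLieAlgebra ℤ (Fin n)) : Prop :=
  ∀ (R : Type) [LieRing R] [LieAlgebra ℤ R] [Fintype R],
    (∀ a b c d : R, ⁅⁅a, b⁆, ⁅c, d⁆⁆ = 0) →
      ∀ pv : Fin k → R,
        Nat.card {r : Fin n → R // ∀ j, (FreeLieAlgebra.lift ℤ r) (g j) = pv j} =
          Fintype.card R ^ (n - k)

/-!
In a commutative ring `R` a Lie polynomial evaluates through its linear part: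
`g(r) = Σᵢ ḡᵢ rᵢ`. Taking `R = ℤ/m`, uniform distribution forces the integer matrix `C` with rows
`ḡ_j` to be surjective modulo every `m ≠ 0`, so the cokernel of `C : ℤⁿ → ℤᵏ` is a finitely
generated divisible abelian group, hence zero. Thus `C` has an integral right inverse `S`, and
`p : x ↦ x S` sends the `j`-th row of `C` to `e_j`; so `ℤⁿ ≅ ℤᵏ × ker p`, and the rows of `C`
together with a basis of `ker p` form a basis of `ℤⁿ`. Finally basis vectors are nonzero,
whereas every element of `M'` has zero linear part.
-/

instance CommRing.isLieAbelian (A : Type*) [CommRing A] : IsLieAbelian A :=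
  isMulCommutative_iff_isLieAbelian.mp inferInstance

def LinearMap.toLieHomOfIsLieAbelian {R L L' : Type*} [CommRing R] [LieRing L] [LieAlgebra R L]
    [LieRing L'] [LieAlgebra R L'] [IsLieAbelian L] [IsLieAbelian L'] (f : L →ₗ[R] L') :
    L →ₗ⁅R⁆ L' :=
  { f with map_lie' := by intro x y; rw [trivial_lie_zero, trivial_lie_zero]; exact f.map_zero }

@[simp]
theorem LinearMap.coe_toLieHomOfIsLieAbelian {R L L' : Type*} [CommRing R] [LieRing L]
    [LieAlgebra R L] [LieRing L'] [LieAlgebra R L'] [IsLieAbelian L] [IsLieAbelian L']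
    (f : L →ₗ[R] L') : ⇑f.toLieHomOfIsLieAbelian = f :=
  rfl

theorem LieHom.map_eq_zero_of_mem_derivedSeries_one {R L L' : Type*} [CommRing R] [LieRing L]
    [LieAlgebra R L] [LieRing L'] [LieAlgebra R L'] [IsLieAbelian L'] (f : L →ₗ⁅R⁆ L') {x : L}
    (hx : x ∈ LieAlgebra.derivedSeries R L 1) : f x = 0 := by
  have : (LieAlgebra.derivedSeries R L 1 : Submodule R L) ≤ LinearMap.ker (f : L →ₗ[R] L') := by
    rw [LieAlgebra.coe_derivedSeries_one_eq, Submodule.span_le]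
    rintro _ ⟨a, b, rfl⟩
    rw [SetLike.mem_coe, LinearMap.mem_ker, LieHom.coe_toLinearMap, LieHom.map_lie,
      trivial_lie_zero]
  exact this hx

/-- Nakayama's lemma for the ideal `(2)` yields an odd, hence nonzero, annihilator `r`, and every
element is a multiple of `r`. -/
theorem subsingleton_of_finite_of_divisible (Q : Type*) [AddCommGroup Q] [Module.Finite ℤ Q]
    (hdiv : ∀ m : ℤ, m ≠ 0 → ∀ q : Q, ∃ q', m • q' = q) : Subsingleton Q := by
  obtain ⟨r, hr1, hr⟩ := Submodule.exists_sub_one_mem_and_smul_eq_zero_of_fg_of_le_smul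
    (Ideal.span {2}) (⊤ : Submodule ℤ Q) Module.Finite.fg_top fun q _ => by
      obtain ⟨q', rfl⟩ := hdiv 2 two_ne_zero q
      exact Submodule.smul_mem_smul (Ideal.mem_span_singleton_self 2) trivial
  have hr0 : r ≠ 0 := by
    rintro rfl
    obtain ⟨t, ht⟩ := Ideal.mem_span_singleton'.mp hr1
    omega
  refine ⟨fun a b => ?_⟩
  obtain ⟨a, rfl⟩ := hdiv r hr0 a
  obtain ⟨b, rfl⟩ := hdiv r hr0 b
  rw [hr a trivial, hr b trivial]

theorem LinearMap.surjective_of_forall_exists_add_smul {M N : Type*} [AddCommGroup M]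
    [AddCommGroup N] [Module.Finite ℤ N] (f : M →ₗ[ℤ] N)
    (h : ∀ m : ℤ, m ≠ 0 → ∀ y, ∃ x z, f x + m • z = y) : Function.Surjective f := by
  rw [← LinearMap.range_eq_top, ← Submodule.Quotient.subsingleton_iff]
  refine subsingleton_of_finite_of_divisible _ fun m hm q => ?_
  obtain ⟨y, rfl⟩ := Submodule.mkQ_surjective _ q
  obtain ⟨x, z, rfl⟩ := h m hm y
  refine ⟨Submodule.mkQ _ z, ?_⟩
  have hx : (LinearMap.range f).mkQ (f x) = 0 := by simp
  rw [map_add, hx, zero_add, map_smul]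

def LinearEquiv.prodKerOfLeftInverse {R M N : Type*} [Ring R] [AddCommGroup M] [Module R M]
    [AddCommGroup N] [Module R N] (i : N →ₗ[R] M) (p : M →ₗ[R] N) (h : ∀ y, p (i y) = y) :
    (N × LinearMap.ker p) ≃ₗ[R] M :=
  LinearEquiv.ofLinearMap (i.coprod (LinearMap.ker p).subtype)
    (p.prod ((LinearMap.id - i ∘ₗ p).codRestrict _ fun x => by simp [h]))
    (by ext x; simp)
    (LinearMap.ext fun ⟨y, z, hz⟩ => by
      rw [LinearMap.mem_ker] at hz
      ext
      · simp [h, hz]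
      · simp [h, hz])

theorem Module.exists_basis_castLE_eq_of_retraction {R M : Type*} [CommRing R] [IsDomain R]
    [IsPrincipalIdealRing R] [AddCommGroup M] [Module R M] [Module.Free R M] [Module.Finite R M]
    {k n : ℕ} (hM : Module.finrank R M = n) (hk : k ≤ n) (v : Fin k → M)
    (p : M →ₗ[R] Fin k → R) (hp : ∀ j, p (v j) = Pi.single j 1) :
    ∃ b : Module.Basis (Fin n) R M, ∀ j, b (Fin.castLE hk j) = v j := by
  classical
  let e := LinearEquiv.prodKerOfLeftInverse (Fintype.linearCombination R v) p fun y => by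
    simpa [Fintype.linearCombination_apply, hp] using (Pi.basisFun R (Fin k)).sum_repr y
  have hK : Module.finrank R (LinearMap.ker p) = n - k := by
    have := e.finrank_eq
    rw [Module.finrank_prod, Module.finrank_fin_fun, hM] at this
    omega
  let b := (((Pi.basisFun R (Fin k)).prod (Module.finBasisOfFinrankEq R _ hK)).map e).reindex
    (finSumFinEquiv.trans (finCongr (Nat.add_sub_cancel' hk)))
  refine ⟨b, fun j => ?_⟩
  have hj : (finSumFinEquiv.trans (finCongr (Nat.add_sub_cancel' hk))).symm (Fin.castLE hk j) =
      Sum.inl j := by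
    rw [Equiv.symm_apply_eq]
    ext
    simp
  rw [Module.Basis.reindex_apply, hj]
  simp [e, LinearEquiv.prodKerOfLeftInverse]

noncomputable def linearPart (n : ℕ) (x : FreeLieAlgebra ℤ (Fin n)) : Fin n → ℤ :=
  fun i => MvPolynomial.coeff (Finsupp.single i 1) (φ' n (ω n x))

theorem linearPart_eq_zero_of_mem_derivedSeries {n : ℕ} {x : FreeLieAlgebra ℤ (Fin n)}
    (hx : x ∈ LieAlgebra.derivedSeries ℤ (FreeLieAlgebra ℤ (Fin n)) 1) : linearPart n x = 0 := by
  have h : φ' n (ω n x) = 0 :=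
    ((φ' n).toLieHom.comp (ω n)).map_eq_zero_of_mem_derivedSeries_one hx
  funext i
  simp [linearPart, h]

noncomputable def linearPartMatrix {n k : ℕ} (g : Fin k → FreeLieAlgebra ℤ (Fin n)) :
    Matrix (Fin k) (Fin n) ℤ :=
  Matrix.of fun j => linearPart n (g j)

theorem lift_apply_eq_sum_linearPart {n : ℕ} {R : Type*} [CommRing R] (r : Fin n → R)
    (x : FreeLieAlgebra ℤ (Fin n)) :
    FreeLieAlgebra.lift ℤ r x = ∑ i, linearPart n x i • r i := by
  classical
  let T : MvPolynomial (Fin n) ℤ →ₗ⁅ℤ⁆ R := LinearMap.toLieHomOfIsLieAbelian <|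
    Fintype.linearCombination ℤ r ∘ₗ
      LinearMap.pi fun i => MvPolynomial.lcoeff ℤ (Finsupp.single i 1)
  have hT : FreeLieAlgebra.lift ℤ r = T.comp ((φ' n).toLieHom.comp (ω n)) := by
    ext i
    have hω : ω n (FreeLieAlgebra.of ℤ i) = FreeAlgebra.ι ℤ i :=
      FreeLieAlgebra.lift_of_apply _ _
    have hφ : φ' n (FreeAlgebra.ι ℤ i) = MvPolynomial.X i := FreeAlgebra.lift_ι_apply _ _
    rw [FreeLieAlgebra.lift_of_apply]
    change r i = T (φ' n (ω n (FreeLieAlgebra.of ℤ i)))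
    have hX : (LinearMap.pi fun j => MvPolynomial.lcoeff ℤ (Finsupp.single j 1))
        (MvPolynomial.X i) = Pi.single i 1 := by
      ext j
      simp [MvPolynomial.coeff_X, Finsupp.single_left_inj one_ne_zero, Pi.single_apply, eq_comm]
    simp [T, hω, hφ, hX]
  rw [hT]
  change T (φ' n (ω n x)) = _
  simp [T, linearPart, Fintype.linearCombination_apply]

theorem IsUniformlyDistributed.exists_mulVec_add_smul {n k : ℕ}
    {g : Fin k → FreeLieAlgebra ℤ (Fin n)} (hu : IsUniformlyDistributed n k g) (m : ℤ)
    (hm : m ≠ 0) (y : Fin k → ℤ) :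
    ∃ v z, (linearPartMatrix g).mulVec v + m • z = y := by
  have : NeZero m.natAbs := ⟨Int.natAbs_ne_zero.mpr hm⟩
  obtain ⟨r, hr⟩ : Nonempty {r : Fin n → ZMod m.natAbs //
      ∀ j, FreeLieAlgebra.lift ℤ r (g j) = y j} := by
    refine (Nat.card_ne_zero.mp ?_).1
    rw [hu _ (fun _ _ _ _ => trivial_lie_zero _ _ _ _)]
    exact pow_ne_zero _ Fintype.card_ne_zero
  obtain ⟨v, rfl⟩ := ZMod.intCast_surjective.comp_left r
  have hdvd : ∀ j, m ∣ y j - (linearPartMatrix g).mulVec v j := by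
    intro j
    rw [← Int.natAbs_dvd, ← ZMod.intCast_zmod_eq_zero_iff_dvd, Int.cast_sub, ← hr j,
      lift_apply_eq_sum_linearPart]
    simp [linearPartMatrix, Matrix.mulVec, dotProduct, zsmul_eq_mul]
  choose z hz using hdvd
  exact ⟨v, z, funext fun j => by
    simp only [Pi.add_apply, Pi.smul_apply, smul_eq_mul]
    linarith [hz j]⟩

theorem uniformly_distributed_abelianized_primitive_general (n k : ℕ) (hk : k ≤ n)
    (g : Fin k → FreeLieAlgebra ℤ (Fin n))
    (hu : IsUniformlyDistributed n k g) :
    (∀ j, g j ∉ LieAlgebra.derivedSeries ℤ (FreeLieAlgebra ℤ (Fin n)) 1) ∧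
    ∃ b : Module.Basis (Fin n) ℤ (Fin n → ℤ),
      ∀ j : Fin k, b (Fin.castLE hk j) =
        fun i => MvPolynomial.coeff (Finsupp.single i 1) (φ' n (ω n (g j))) := by
  have hC : Function.Surjective (linearPartMatrix g).mulVec :=
    (linearPartMatrix g).mulVecLin.surjective_of_forall_exists_add_smul
      (IsUniformlyDistributed.exists_mulVec_add_smul hu)
  obtain ⟨S, hCS⟩ := Matrix.mulVec_surjective_iff_exists_right_inverse.mp hC
  obtain ⟨b, hb⟩ := Module.exists_basis_castLE_eq_of_retraction (Module.finrank_fin_fun ℤ) hk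
    (linearPartMatrix g) S.vecMulLinear fun j => by
      ext j'
      simp [← Matrix.mul_apply_eq_vecMul, hCS, Matrix.one_eq_pi_single]
  refine ⟨fun j hj => b.ne_zero (Fin.castLE hk j) ?_, b, hb⟩
  rw [hb]
  exact linearPart_eq_zero_of_mem_derivedSeries hj

/-- If a system `g₁,…,g_k` of the free metabelian Lie ring is uniformly
distributed on the variety of metabelian Lie rings, then no `gᵢ` lies in the derived
subalgebra, and the images `ḡ₁,…,ḡ_k` under `M → M/M'` form a primitive system in the
free abelian Lie ring `M/M' ≅ ℤⁿ` (they extend to a basis of `ℤⁿ`). -/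
theorem uniformly_distributed_abelianized_primitive (n k : ℕ) (hk1 : 1 ≤ k) (hk : k ≤ n)
    (g : Fin k → FreeLieAlgebra ℤ (Fin n))
    (hu : IsUniformlyDistributed n k g) :
    (∀ j, g j ∉ LieAlgebra.derivedSeries ℤ (FreeLieAlgebra ℤ (Fin n)) 1) ∧
    ∃ b : Module.Basis (Fin n) ℤ (Fin n → ℤ),
      ∀ j : Fin k, b (Fin.castLE hk j) =
        fun i => MvPolynomial.coeff (Finsupp.single i 1) (φ' n (ω n (g j))) :=
  uniformly_distributed_abelianized_primitive_general n k hk g hu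
end
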